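/- Let X and H be finite simple graphs with |V(H)| ≥ 1. Then the independence number of the corona product X ⊙ H equals |V(X)| times the independence number of H; that is, α(X ⊙ H) = |V(X)| · α(H). -/

import Mathlib

open MvPolynomial CategoryTheory

universe u v

/-- The corona product `X ⊙ H` of two simple graphs: one copy of `X` and, for each vertex `i`
of `X`, a copy of `H` all of whose vertices are joined to `i`. -/
def SimpleGraph.corona {α β : Type*} (X : SimpleGraph α) (H : SimpleGraph β) :
    SimpleGraph (α ⊕ α × β) where
  Adj u v :=
    match u, v with
    | Sum.inl i, Sum.inl j => X.Adj i j
    | Sum.inl i, Sum.inr p => i = p.1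
    | Sum.inr p, Sum.inl j => p.1 = j
    | Sum.inr p, Sum.inr q => p.1 = q.1 ∧ H.Adj p.2 q.2
  symm := by
    constructor
    rintro (i | p) (j | q) h
    · exact X.adj_symm h
    · exact h.symm
    · exact h.symm
    · exact ⟨h.1.symm, H.adj_symm h.2⟩
  loopless := by
    constructor
    rintro (i | p) h
    · exact X.irrefl h
    · exact H.irrefl h.2

/-- The edge ideal `I(G)` of a simple graph inside `K[V(G)]`. -/
noncomputable def SimpleGraph.edgeIdeal (K : Type u) [Field K] {V : Type v} (G : SimpleGraph V) :
    Ideal (MvPolynomial V K) :=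
  Ideal.span {m | ∃ i j, G.Adj i j ∧ m = X i * X j}

/-- The set of isolated vertices of a graph. -/
def SimpleGraph.isolatedVerts {V : Type v} (H : SimpleGraph V) : Set V :=
  {v | ∀ w, ¬ H.Adj v w}

/-- The induced subgraph `H'` of `H` on the non-isolated vertices. -/
def SimpleGraph.nonIsolatedPart {V : Type v} (H : SimpleGraph V) :
    SimpleGraph {v : V | ∃ w, H.Adj v w} :=
  H.induce {v : V | ∃ w, H.Adj v w}

/-- `depth` of `S/I` over `S = K[V]`, computed with respect to the graded maximal ideal
`(X v : v ∈ V)`: the supremum of lengths of `S/I`-regular sequences contained in that ideal. -/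
noncomputable def gradedDepth (K : Type u) [Field K] {V : Type v}
    (I : Ideal (MvPolynomial V K)) : ℕ :=
  sSup {n : ℕ | ∃ rs : List (MvPolynomial V K), rs.length = n ∧
    (∀ r ∈ rs, r ∈ Ideal.span (Set.range (MvPolynomial.X : V → MvPolynomial V K))) ∧
    RingTheory.Sequence.IsRegular (MvPolynomial V K ⧸ I) rs}

/-- `projDimLE R n M` : the module `M` has a projective resolution of length at most `n`. -/
def projDimLE (R : Type u) [Ring R] : ℕ → ModuleCat.{v} R → Prop
  | 0, M => Module.Projective R M
  | n + 1, M => ∃ (P : ModuleCat.{v} R) (f : P →ₗ[R] M), Module.Projective R P ∧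
      Function.Surjective f ∧ projDimLE R n (ModuleCat.of R (LinearMap.ker f))

/-- The projective dimension of a module, as an extended natural number. -/
noncomputable def projDim (R : Type u) [Ring R] (M : Type v) [AddCommGroup M] [Module R M] :
    ℕ∞ :=
  sInf {n : ℕ∞ | ∃ k : ℕ, (k : ℕ∞) = n ∧ projDimLE R k (ModuleCat.of R M)}

/-- The independence number of a graph. -/
noncomputable def SimpleGraph.indepNumber {V : Type v} (G : SimpleGraph V) : ℕ :=
  sSup {n : ℕ | ∃ s : Finset V, s.card = n ∧ ∀ v ∈ s, ∀ w ∈ s, ¬ G.Adj v w}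

lemma indep_bdd {V : Type*} [Fintype V] (G : SimpleGraph V) :
    BddAbove {n : ℕ | ∃ s : Finset V, s.card = n ∧ ∀ v ∈ s, ∀ w ∈ s, ¬ G.Adj v w} := by
  refine ⟨Fintype.card V, ?_⟩
  rintro n ⟨s, rfl, -⟩
  simpa using s.card_le_univ

lemma indep_zero_mem {V : Type*} (G : SimpleGraph V) :
    0 ∈ {n : ℕ | ∃ s : Finset V, s.card = n ∧ ∀ v ∈ s, ∀ w ∈ s, ¬ G.Adj v w} :=
  ⟨∅, by simp, by simp⟩

theorem stmt15 {α β : Type v} [Fintype α] [Fintype β] [Nonempty β]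
    (X : SimpleGraph α) (H : SimpleGraph β) :
    (X.corona H).indepNumber = Fintype.card α * H.indepNumber := by
  classical
  have h1 : 1 ≤ H.indepNumber := by
    apply le_csSup (indep_bdd H)
    exact ⟨{Classical.arbitrary β}, by simp, by
      intro v hv w hw
      simp only [Finset.mem_singleton] at hv hw
      subst hv; subst hw; exact H.irrefl⟩
  apply le_antisymm
  · -- upper bound
    apply csSup_le ⟨0, indep_zero_mem _⟩
    rintro n ⟨s, rfl, hs⟩
    set f : α ⊕ α × β → α := Sum.elim id Prod.fst with hf
    rw [Finset.card_eq_sum_card_fiberwise (f := f) (t := Finset.univ)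
      (fun x _ => Finset.mem_univ _)]
    have : Fintype.card α * H.indepNumber = ∑ _i : α, H.indepNumber := by
      rw [Finset.sum_const, Finset.card_univ, smul_eq_mul]
    rw [this]
    apply Finset.sum_le_sum
    intro i _
    set F := s.filter (fun x => f x = i) with hF
    by_cases hin : Sum.inl i ∈ s
    · have hFeq : F = {Sum.inl i} := by
        apply Finset.ext
        intro x
        simp only [hF, Finset.mem_filter, Finset.mem_singleton]
        constructor
        · rintro ⟨hx, hfx⟩
          match x with
          | Sum.inl j => simpa [hf] using hfx ▸ (by simpa [hf] using hfx : j = i) ▸ rfl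
          | Sum.inr p =>
            exfalso
            have hp1 : p.1 = i := by simpa [hf] using hfx
            exact hs (Sum.inl i) hin (Sum.inr p) hx (by simp [SimpleGraph.corona, hp1])
        · rintro rfl
          exact ⟨hin, by simp [hf]⟩
      rw [hFeq]
      simpa using h1
    · -- no inl i in s; all elements of F are inr
      have hinr : ∀ x ∈ F, ∃ b : β, x = Sum.inr (i, b) := by
        intro x hx
        simp only [hF, Finset.mem_filter] at hx
        match x with
        | Sum.inl j =>
          exfalso
          have : j = i := by simpa [hf] using hx.2
          exact hin (this ▸ hx.1)
        | Sum.inr p =>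
          have : p.1 = i := by simpa [hf] using hx.2
          exact ⟨p.2, by rw [← this]⟩
      set g : α ⊕ α × β → β := Sum.elim (fun _ => Classical.arbitrary β) Prod.snd with hg
      have hcard : F.card = (F.image g).card := by
        rw [Finset.card_image_of_injOn]
        intro x hx y hy hxy
        obtain ⟨b, rfl⟩ := hinr x hx
        obtain ⟨c, rfl⟩ := hinr y hy
        simp only [hg, Sum.elim_inr] at hxy
        rw [hxy]
      have hmem : (F.image g).card ∈
          {n : ℕ | ∃ t : Finset β, t.card = n ∧ ∀ v ∈ t, ∀ w ∈ t, ¬ H.Adj v w} := by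
        refine ⟨F.image g, rfl, ?_⟩
        intro v hv w hw hvw
        obtain ⟨x, hx, hgx⟩ := Finset.mem_image.mp hv
        obtain ⟨y, hy, hgy⟩ := Finset.mem_image.mp hw
        obtain ⟨b, rfl⟩ := hinr x hx
        obtain ⟨c, rfl⟩ := hinr y hy
        simp only [hg, Sum.elim_inr] at hgx hgy
        subst hgx; subst hgy
        have hxs : Sum.inr (i, b) ∈ s := (Finset.mem_filter.mp hx).1
        have hys : Sum.inr (i, c) ∈ s := (Finset.mem_filter.mp hy).1
        exact hs _ hxs _ hys ⟨rfl, hvw⟩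
      calc F.card = (F.image g).card := hcard
        _ ≤ H.indepNumber := le_csSup (indep_bdd H) hmem
  · -- lower bound
    obtain ⟨t, ht, htind⟩ : ∃ t : Finset β, t.card = H.indepNumber ∧
        ∀ v ∈ t, ∀ w ∈ t, ¬ H.Adj v w := by
      have := Nat.sSup_mem ⟨0, indep_zero_mem H⟩ (indep_bdd H)
      obtain ⟨t, ht, hind⟩ := this
      exact ⟨t, ht, hind⟩
    apply le_csSup (indep_bdd _)
    refine ⟨(Finset.univ ×ˢ t).map ⟨Sum.inr, Sum.inr_injective⟩, ?_, ?_⟩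
    · simp [ht, Finset.card_map]
    · intro v hv w hw
      simp only [Finset.mem_map, Finset.mem_product, Function.Embedding.coeFn_mk] at hv hw
      obtain ⟨⟨i, b⟩, ⟨-, hb⟩, rfl⟩ := hv
      obtain ⟨⟨j, c⟩, ⟨-, hc⟩, rfl⟩ := hw
      rintro ⟨-, hadj⟩
      exact htind b hb c hc hadj
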